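/- Let M be an irreducible Markov chain on a countable state space V and let A ⊆ W be a tail event. Then the function h : V → [0,1] defined by h(z) = μ_z(A) is a sharp harmonic function. -/

import Mathlib

open MeasureTheory Filter Set Topology
open scoped Classical

/-- An irreducible Markov chain on a countable state space `V`, given together with
its family of path-space laws `μ z` (the law of the chain started at `z`),
characterised on cylinder sets by the transition probabilities. -/
structure MarkovChain (V : Type*) [Countable V] [MeasurableSpace V] where
  /-- transition probabilities -/
  p : V → V → ℝ
  p_nonneg : ∀ x y, 0 ≤ p x y
  p_row_sum : ∀ x, HasSum (p x) 1
  irred : ∀ x y : V, ∃ (n : ℕ) (w : ℕ → V),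
    w 0 = x ∧ w n = y ∧ ∀ i < n, 0 < p (w i) (w (i + 1))
  /-- the law of the chain started at `z`, on the path space `ℕ → V` -/
  μ : V → Measure (ℕ → V)
  μ_prob : ∀ z, IsProbabilityMeasure (μ z)
  μ_cyl : ∀ (z : V) (n : ℕ) (w : ℕ → V),
    (μ z {ω : ℕ → V | ∀ i ≤ n, ω i = w i}).toReal =
      if w 0 = z then ∏ i ∈ Finset.range n, p (w i) (w (i + 1)) else 0

variable {V : Type*} [Countable V] [MeasurableSpace V]

/-- `h : V → ℝ` is harmonic if `h x = ∑_y p x y * h y` for every `x`. -/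
def IsHarmonic (M : MarkovChain V) (h : V → ℝ) : Prop :=
  ∀ x, HasSum (fun y => M.p x y * h y) (h x)

/-- The event `1^s` that the values of `s` along the trajectory converge to `1`. -/
def oneEvent (s : V → ℝ) : Set (ℕ → V) :=
  {ω | Tendsto (fun n => s (ω n)) atTop (𝓝 1)}

/-- The event `0^s` that the values of `s` along the trajectory converge to `0`. -/
def zeroEvent (s : V → ℝ) : Set (ℕ → V) :=
  {ω | Tendsto (fun n => s (ω n)) atTop (𝓝 0)}

/-- A harmonic function `s : V → [0,1]` is sharp if, for every starting state,
the values of `s` along the trajectory of the chain converge to `0` or `1`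
almost surely. -/
def IsSharp (M : MarkovChain V) (s : V → ℝ) : Prop :=
  IsHarmonic M s ∧ (∀ x, s x ∈ Set.Icc (0 : ℝ) 1) ∧
  ∀ z, ∀ᵐ ω ∂ M.μ z,
    Tendsto (fun n => s (ω n)) atTop (𝓝 0) ∨ Tendsto (fun n => s (ω n)) atTop (𝓝 1)

/-- A tail event: a measurable event invariant under deleting the first step. -/
def IsTailEvent (A : Set (ℕ → V)) : Prop :=
  MeasurableSet A ∧ (fun ω : ℕ → V => fun n => ω (n + 1)) ⁻¹' A = A

/-- An `M`-boundary: a measurable space `N` with measures `ν z`, `z ∈ V`, and a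
measurable, shift-invariant, measure-preserving map `f` from path space to `N`. -/
structure MBoundary (M : MarkovChain V) (N : Type*) [MeasurableSpace N] where
  ν : V → Measure N
  f : (ℕ → V) → N
  f_meas : Measurable f
  shift_inv : ∀ ω : ℕ → V, f (fun n => ω (n + 1)) = f ω
  meas_pres : ∀ (z : V) (X : Set N), MeasurableSet X → ν z X = M.μ z (f ⁻¹' X)

/-- The `M`-boundary is faithful to a sharp harmonic function `s` if some measurable
`X ⊆ N` satisfies `μ_z (1^s △ f⁻¹ X) = 0` for every `z`. -/
def Faithful {N : Type*} [MeasurableSpace N] (M : MarkovChain V) (B : MBoundary M N)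
    (s : V → ℝ) : Prop :=
  ∃ X : Set N, MeasurableSet X ∧ ∀ z, M.μ z (symmDiff (oneEvent s) (B.f ⁻¹' X)) = 0

/-- The `M`-boundary is a realisation of the Poisson boundary: every bounded harmonic
function is the integral of an essentially unique bounded measurable function on `N`,
and conversely integrating any bounded measurable function on `N` gives a bounded
harmonic function. -/
def IsRealisation {N : Type*} [MeasurableSpace N] (M : MarkovChain V)
    (B : MBoundary M N) : Prop :=
  (∀ h : V → ℝ, IsHarmonic M h → (∃ C, ∀ x, |h x| ≤ C) →
    ∃ hhat : N → ℝ, Measurable hhat ∧ (∃ C, ∀ η, |hhat η| ≤ C) ∧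
      (∀ z, h z = ∫ η, hhat η ∂ B.ν z) ∧
      (∀ g : N → ℝ, Measurable g → (∃ C, ∀ η, |g η| ≤ C) →
        (∀ z, h z = ∫ η, g η ∂ B.ν z) → ∀ z, hhat =ᵐ[B.ν z] g)) ∧
  (∀ g : N → ℝ, Measurable g → (∃ C, ∀ η, |g η| ≤ C) →
    (∃ C, ∀ z, |∫ η, g η ∂ B.ν z| ≤ C) ∧ IsHarmonic M (fun z => ∫ η, g η ∂ B.ν z))

/-!
The state space is necessarily discrete: if two states `x ≠ y` were not separated by measurable
sets, relabelling `x` as `y` would fix every measurable event of path space, although `μ_x`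
charges `{ω 0 = x}` and not `{ω 0 = y}`. The product formula for cylinders then yields the Markov
property `μ_z(C ∩ θₙ⁻¹ B) = μ_z(C) μ_{w n}(B)` for the cylinder `C` fixing the first steps
`w 0, …, w n`, where `θₙ` deletes the first `n` steps. A tail event satisfies `θₙ⁻¹ A = A`, so
`ω ↦ μ_{ω n}(A)` is the conditional expectation of `1_A` given the first `n + 1` steps. For
`n = 1` this is the harmonicity of `z ↦ μ_z(A)`, and by Lévy's upward theorem `μ_{ω n}(A)`
converges almost surely to `1_A(ω) ∈ {0, 1}`.
-/

theorem MeasurableSpace.pi_le_invariants_comp_left {ι E : Type*} [MeasurableSpace E]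
    {t : E → E} (ht : ‹MeasurableSpace E› ≤ MeasurableSpace.invariants t) :
    MeasurableSpace.pi ≤ MeasurableSpace.invariants (fun ω : ι → E => t ∘ ω) :=
  iSup_le fun i => MeasurableSpace.comap_le_iff_le_map.mpr fun s hs =>
    ⟨measurable_pi_apply i hs,
      congrArg (fun u => (fun ω : ι → E => ω i) ⁻¹' u) (ht s hs).2⟩

namespace MeasureTheory.Filtration

variable {ι : Type*} [Preorder ι] {X : ι → Type*} [∀ i, MeasurableSpace (X i)]

theorem measurable_piLE_eval (i : ι) : Measurable[piLE (X := X) i] (fun ω => ω i) :=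
  (measurable_pi_apply (⟨i, le_rfl⟩ : Set.Iic i)).comp
    (comap_measurable (Preorder.restrictLe i))

theorem iSup_piLE : ⨆ i, piLE (X := X) i = MeasurableSpace.pi :=
  le_antisymm (iSup_le piLE.le) <| iSup_le fun i =>
    (measurable_piLE_eval i).comap_le.trans
      (le_iSup (fun j => (piLE (X := X) j : MeasurableSpace _)) i)

end MeasureTheory.Filtration

theorem ae_tendsto_zero_or_one_of_ae_eq_condExp_indicator {Ω : Type*} {m0 : MeasurableSpace Ω}
    {μ : Measure Ω} [IsFiniteMeasure μ] {ℱ : Filtration ℕ m0} (hℱ : ⨆ n, ℱ n = m0)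
    {A : Set Ω} (hA : MeasurableSet A) {f : ℕ → Ω → ℝ}
    (hf : ∀ n, f n =ᵐ[μ] μ[A.indicator 1 | ℱ n]) :
    ∀ᵐ ω ∂μ,
      Tendsto (fun n => f n ω) atTop (𝓝 0) ∨ Tendsto (fun n => f n ω) atTop (𝓝 1) := by
  have hlevy : ∀ᵐ ω ∂μ, Tendsto (fun n => μ[A.indicator 1 | ℱ n] ω) atTop
      (𝓝 (A.indicator (1 : Ω → ℝ) ω)) :=
    ((integrable_const 1).indicator hA).tendsto_ae_condExp
      (by rw [hℱ]; exact stronglyMeasurable_const.indicator hA)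
  filter_upwards [hlevy, ae_all_iff.mpr hf] with ω hω hfω
  rw [show (fun n => f n ω) = _ from funext hfω]
  by_cases hωA : ω ∈ A
  · rw [Set.indicator_of_mem hωA, Pi.one_apply] at hω
    exact Or.inr hω
  · rw [Set.indicator_of_notMem hωA] at hω
    exact Or.inl hω

section PathSpace

variable {α : Type*}

def pathCyl (n : ℕ) (w : ℕ → α) : Set (ℕ → α) := {ω | ∀ i ≤ n, ω i = w i}

def pathCyls (α : Type*) : Set (Set (ℕ → α)) := {s | ∃ n w, pathCyl n w = s}

def pathShift (n : ℕ) (ω : ℕ → α) : ℕ → α := fun k => ω (n + k)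

def pathSplice (n : ℕ) (w w' : ℕ → α) : ℕ → α :=
  fun i => if i ≤ n then w i else w' (i - n)

theorem pathCyl_eq_preimage_restrictLe (n : ℕ) (w : ℕ → α) :
    pathCyl n w = Preorder.restrictLe (π := fun _ => α) n ⁻¹' {Preorder.restrictLe n w} := by
  ext ω
  simp [pathCyl, funext_iff]

theorem pathCyl_anti {n m : ℕ} (h : n ≤ m) (w : ℕ → α) : pathCyl m w ⊆ pathCyl n w :=
  fun _ hω i hi => hω i (hi.trans h)

theorem pathCyl_eq_of_mem {n : ℕ} {w ω : ℕ → α} (hω : ω ∈ pathCyl n w) :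
    pathCyl n w = pathCyl n ω :=
  Set.ext fun _ => forall₂_congr fun i hi => by rw [hω i hi]

theorem isPiSystem_pathCyls : IsPiSystem (pathCyls α) := by
  rintro _ ⟨n, w, rfl⟩ _ ⟨m, w', rfl⟩ ⟨ω, hω, hω'⟩
  rw [pathCyl_eq_of_mem hω, pathCyl_eq_of_mem hω']
  rcases le_total n m with h | h
  · exact ⟨m, ω, (Set.inter_eq_right.mpr (pathCyl_anti h ω)).symm⟩
  · exact ⟨n, ω, (Set.inter_eq_left.mpr (pathCyl_anti h ω)).symm⟩

theorem pathSplice_of_le {n i : ℕ} (hi : i ≤ n) (w w' : ℕ → α) :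
    pathSplice n w w' i = w i :=
  if_pos hi

theorem pathSplice_add {n : ℕ} {w w' : ℕ → α} (hw : w' 0 = w n) (i : ℕ) :
    pathSplice n w w' (n + i) = w' i := by
  rcases Nat.eq_zero_or_pos i with rfl | hi
  · simp [pathSplice, hw]
  · simp [pathSplice, hi.ne']

theorem pathCyl_inter_preimage_pathShift {n m : ℕ} {w w' : ℕ → α} (hw : w' 0 = w n) :
    pathCyl n w ∩ pathShift n ⁻¹' pathCyl m w' = pathCyl (n + m) (pathSplice n w w') := by
  ext ω
  constructor
  · rintro ⟨hω, hω'⟩ i hi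
    by_cases hin : i ≤ n
    · rw [pathSplice_of_le hin, hω i hin]
    · obtain ⟨j, rfl⟩ : ∃ j, i = n + j := ⟨i - n, by omega⟩
      rw [pathSplice_add hw, ← hω' j (by omega)]
      rfl
  · intro hω
    refine ⟨fun i hi => (hω i (by omega)).trans (pathSplice_of_le hi w w'), fun j hj => ?_⟩
    exact (hω (n + j) (by omega)).trans (pathSplice_add hw j)

theorem pathCyl_inter_preimage_pathShift_of_ne {n m : ℕ} {w w' : ℕ → α} (hw : w' 0 ≠ w n) :
    pathCyl n w ∩ pathShift n ⁻¹' pathCyl m w' = ∅ :=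
  Set.eq_empty_of_forall_notMem fun _ ⟨hω, hω'⟩ =>
    hw ((hω' 0 (Nat.zero_le m)).symm.trans (hω n le_rfl))

variable [MeasurableSpace α]

theorem measurableSet_pathCyl [MeasurableSingletonClass α] (n : ℕ) (w : ℕ → α) :
    MeasurableSet (pathCyl n w) := by
  rw [pathCyl_eq_preimage_restrictLe]
  exact Preorder.measurable_restrictLe n (MeasurableSet.singleton _)

theorem measurable_pathShift (n : ℕ) : Measurable (pathShift (α := α) n) :=
  measurable_pi_lambda _ fun k => measurable_pi_apply (n + k)

theorem measurableSet_generateFrom_pathCyls_of_piLE [Countable α] {n : ℕ} {s : Set (ℕ → α)}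
    (hs : MeasurableSet[Filtration.piLE (X := fun _ => α) n] s) :
    MeasurableSet[MeasurableSpace.generateFrom (pathCyls α)] s := by
  obtain ⟨B, -, rfl⟩ := hs
  rw [← B.biUnion_of_singleton, Set.preimage_iUnion₂]
  refine MeasurableSet.biUnion B.to_countable fun b _ => ?_
  rcases (Preorder.restrictLe (π := fun _ => α) n ⁻¹' {b}).eq_empty_or_nonempty
    with h | ⟨ω, rfl⟩
  · rw [h]
    exact MeasurableSpace.measurableSet_empty _
  · rw [← pathCyl_eq_preimage_restrictLe]
    exact MeasurableSpace.measurableSet_generateFrom ⟨n, ω, rfl⟩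

theorem generateFrom_pathCyls [Countable α] [MeasurableSingletonClass α] :
    MeasurableSpace.generateFrom (pathCyls α) = MeasurableSpace.pi := by
  refine le_antisymm (MeasurableSpace.generateFrom_le ?_) ?_
  · rintro _ ⟨n, w, rfl⟩
    exact measurableSet_pathCyl n w
  · rw [← Filtration.iSup_piLE]
    exact iSup_le fun n s hs => measurableSet_generateFrom_pathCyls_of_piLE hs

theorem IsTailEvent.preimage_pathShift [Countable α] {A : Set (ℕ → α)} (hA : IsTailEvent A)
    (n : ℕ) : pathShift n ⁻¹' A = A := by
  induction n with
  | zero =>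
    have hid : pathShift (α := α) 0 = id := funext fun ω => funext fun k => by simp [pathShift]
    rw [hid, Set.preimage_id]
  | succ n ih =>
    have hcomp :
        pathShift (n + 1) = (fun ω : ℕ → α => fun k => ω (k + 1)) ∘ pathShift n := by
      funext ω k
      simp only [pathShift, Function.comp_apply]
      ring_nf
    rw [hcomp, Set.preimage_comp, hA.2, ih]

end PathSpace

namespace MarkovChain

instance (M : MarkovChain V) (z : V) : IsProbabilityMeasure (M.μ z) := M.μ_prob z

theorem measure_pathCyl (M : MarkovChain V) (z : V) (n : ℕ) (w : ℕ → V) :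
    M.μ z (pathCyl n w) =
      ENNReal.ofReal (if w 0 = z then ∏ i ∈ Finset.range n, M.p (w i) (w (i + 1)) else 0) := by
  rw [← M.μ_cyl z n w, ENNReal.ofReal_toReal (measure_ne_top _ _)]
  rfl

theorem measure_eval_zero (M : MarkovChain V) (z x : V) :
    M.μ z {ω | ω 0 = x} = if x = z then 1 else 0 := by
  have hcyl : {ω : ℕ → V | ω 0 = x} = pathCyl 0 (fun _ => x) := by ext; simp [pathCyl]
  rw [hcyl, measure_pathCyl]
  split_ifs <;> simp

theorem separatesPoints (M : MarkovChain V) : MeasurableSpace.SeparatesPoints V := by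
  refine ⟨fun x y hxy => by_contra fun hne => ?_⟩
  have hiff : ∀ s, MeasurableSet s → (x ∈ s ↔ y ∈ s) := fun s hs =>
    ⟨hxy s hs, fun hy => by_contra fun hx => hxy sᶜ hs.compl hx hy⟩
  set t : V → V := Function.update id x y
  have ht : ‹MeasurableSpace V› ≤ MeasurableSpace.invariants t := fun s hs => by
    refine ⟨hs, Set.ext fun v => ?_⟩
    by_cases hv : v = x
    · subst hv
      simp [t, hiff s hs]
    · simp [t, Function.update_of_ne hv]
  set H := toMeasurable (M.μ x) {ω : ℕ → V | ω 0 = y}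
  have hH : M.μ x H = 0 := by
    rw [measure_toMeasurable, measure_eval_zero, if_neg (Ne.symm hne)]
  have hinv : (fun ω : ℕ → V => t ∘ ω) ⁻¹' H = H :=
    (MeasurableSpace.pi_le_invariants_comp_left ht H (measurableSet_toMeasurable _ _)).2
  have hsub : {ω : ℕ → V | ω 0 = x} ⊆ H := fun ω hω => by
    rw [← hinv]
    exact subset_toMeasurable _ _ (show t (ω 0) = y by simp [t, show ω 0 = x from hω])
  have hx_null := measure_mono_null hsub hH
  rw [measure_eval_zero, if_pos rfl] at hx_null
  exact one_ne_zero hx_null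

theorem discreteMeasurableSpace (M : MarkovChain V) : DiscreteMeasurableSpace V := by
  have := M.separatesPoints
  infer_instance

variable (M : MarkovChain V)

theorem prod_pathSplice {n : ℕ} {w w' : ℕ → V} (hw : w' 0 = w n) (m : ℕ) :
    ∏ i ∈ Finset.range (n + m), M.p (pathSplice n w w' i) (pathSplice n w w' (i + 1)) =
      (∏ i ∈ Finset.range n, M.p (w i) (w (i + 1))) *
        ∏ i ∈ Finset.range m, M.p (w' i) (w' (i + 1)) := by
  rw [Finset.prod_range_add]
  congr 1
  · refine Finset.prod_congr rfl fun i hi => ?_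
    rw [Finset.mem_range] at hi
    rw [pathSplice_of_le hi.le, pathSplice_of_le hi]
  · refine Finset.prod_congr rfl fun i _ => ?_
    rw [add_assoc, pathSplice_add hw, pathSplice_add hw]

theorem measure_pathCyl_inter_preimage_pathShift_pathCyl (z : V) (n m : ℕ) (w w' : ℕ → V) :
    M.μ z (pathCyl n w ∩ pathShift n ⁻¹' pathCyl m w') =
      M.μ z (pathCyl n w) * M.μ (w n) (pathCyl m w') := by
  by_cases hw : w' 0 = w n
  · have hP := Finset.prod_nonneg fun i (_ : i ∈ Finset.range n) => M.p_nonneg (w i) (w (i + 1))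
    rw [pathCyl_inter_preimage_pathShift hw, measure_pathCyl, measure_pathCyl, measure_pathCyl,
      M.prod_pathSplice hw, pathSplice_of_le (Nat.zero_le n), if_pos hw]
    split_ifs
    · exact ENNReal.ofReal_mul hP
    · simp
  · rw [pathCyl_inter_preimage_pathShift_of_ne hw, measure_pathCyl M (w n), if_neg hw]
    simp

variable [DiscreteMeasurableSpace V] {A : Set (ℕ → V)}

theorem measure_pathCyl_inter_preimage_pathShift (z : V) (n : ℕ) (w : ℕ → V)
    {B : Set (ℕ → V)} (hB : MeasurableSet B) :
    M.μ z (pathCyl n w ∩ pathShift n ⁻¹' B) = M.μ z (pathCyl n w) * M.μ (w n) B := by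
  set C := pathCyl n w
  have hmap : ∀ B, MeasurableSet B →
      ((M.μ z).restrict C).map (pathShift n) B = M.μ z (C ∩ pathShift n ⁻¹' B) := by
    intro B hB
    rw [Measure.map_apply (measurable_pathShift n) hB,
      Measure.restrict_apply (measurable_pathShift n hB), Set.inter_comm]
  have hext : ((M.μ z).restrict C).map (pathShift n) = M.μ z C • M.μ (w n) := by
    refine ext_of_generate_finite _ generateFrom_pathCyls.symm isPiSystem_pathCyls ?_ ?_
    · rintro _ ⟨m, w', rfl⟩
      rw [hmap _ (measurableSet_pathCyl m w'),
        M.measure_pathCyl_inter_preimage_pathShift_pathCyl, Measure.smul_apply, smul_eq_mul]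
    · simp [hmap _ MeasurableSet.univ]
  rw [← hmap B hB, hext, Measure.smul_apply, smul_eq_mul]

/-- The restriction map to the first `n + 1` coordinates takes values in a countable space,
where measures are determined by singletons; their preimages are cylinders, on which the
identity is the Markov property. -/
theorem setLIntegral_measure_eval_of_isTailEvent (hA : IsTailEvent A) (z : V) {n : ℕ}
    {s : Set (ℕ → V)} (hs : MeasurableSet[Filtration.piLE (X := fun _ => V) n] s) :
    ∫⁻ ω in s, M.μ (ω n) A ∂M.μ z = M.μ z (s ∩ A) := by
  obtain ⟨B, -, rfl⟩ := hs
  set R := Preorder.restrictLe (π := fun _ : ℕ => V) n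
  have hR : Measurable R := Preorder.measurable_restrictLe n
  have hext : ((M.μ z).withDensity fun ω => M.μ (ω n) A).map R =
      ((M.μ z).restrict A).map R := by
    refine Measure.ext_of_singleton fun b => ?_
    have hb : MeasurableSet (R ⁻¹' {b}) := hR (.singleton b)
    rw [Measure.map_apply hR (.singleton b), Measure.map_apply hR (.singleton b),
      withDensity_apply _ hb, Measure.restrict_apply hb]
    rcases (R ⁻¹' {b}).eq_empty_or_nonempty with h | ⟨ω, rfl⟩
    · simp [h]
    · rw [← pathCyl_eq_preimage_restrictLe, setLIntegral_congr_fun (measurableSet_pathCyl n ω)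
        (fun ω' hω' => by rw [hω' n le_rfl]), setLIntegral_const, mul_comm,
        ← M.measure_pathCyl_inter_preimage_pathShift z n ω hA.1, hA.preimage_pathShift]
  have hB := congrArg (· B) hext
  have hRB : MeasurableSet (R ⁻¹' B) := hR .of_discrete
  rwa [Measure.map_apply hR .of_discrete, withDensity_apply _ hRB,
    Measure.map_apply hR .of_discrete, Measure.restrict_apply hRB] at hB

theorem ae_eq_condExp_indicator_of_isTailEvent (hA : IsTailEvent A) (z : V) (n : ℕ) :
    (fun ω => (M.μ (ω n) A).toReal) =ᵐ[M.μ z]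
      (M.μ z)[A.indicator 1 | Filtration.piLE (X := fun _ => V) n] := by
  have hmeas : Measurable[Filtration.piLE (X := fun _ => V) n] fun ω => (M.μ (ω n) A).toReal :=
    (Measurable.of_discrete (f := fun v : V => (M.μ v A).toReal)).comp
      (Filtration.measurable_piLE_eval (X := fun _ => V) n)
  refine ae_eq_condExp_of_forall_setIntegral_eq (Filtration.piLE.le n)
    ((integrable_const 1).indicator hA.1) (fun s _ _ => ?_) (fun s hs _ => ?_)
    hmeas.aestronglyMeasurable
  · refine (integrable_const (1 : ℝ)).integrableOn.mono' ?_ (ae_of_all _ fun ω => ?_)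
    · exact (hmeas.mono (Filtration.piLE.le n) le_rfl).aestronglyMeasurable
    · rw [Real.norm_of_nonneg ENNReal.toReal_nonneg]
      exact measureReal_le_one
  have hint : ∫ ω in s, (M.μ (ω n) A).toReal ∂M.μ z =
      (∫⁻ ω in s, M.μ (ω n) A ∂M.μ z).toReal :=
    integral_toReal ((Measurable.of_discrete (f := fun v : V => M.μ v A)).comp
      (measurable_pi_apply n)).aemeasurable (ae_of_all _ fun _ => measure_lt_top _ _)
  rw [hint, M.setLIntegral_measure_eval_of_isTailEvent hA z hs, integral_indicator_one hA.1,
    Measure.real_def, Measure.restrict_apply hA.1, Set.inter_comm]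

theorem measure_eval_one (z y : V) : M.μ z {ω | ω 1 = y} = ENNReal.ofReal (M.p z y) := by
  have hconull : M.μ z {ω : ℕ → V | ω 0 = z}ᶜ = 0 := by
    have hmeas : MeasurableSet {ω : ℕ → V | ω 0 = z} :=
      measurable_pi_apply (X := fun _ => V) 0 (.singleton z)
    rw [prob_compl_eq_zero_iff hmeas, measure_eval_zero, if_pos rfl]
  have hcyl : {ω : ℕ → V | ω 1 = y} ∩ {ω | ω 0 = z} =
      pathCyl 1 fun k => if k = 0 then z else y := by
    ext ω
    simp [pathCyl, Nat.le_one_iff_eq_zero_or_eq_one, or_imp, forall_and, and_comm]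
  rw [← measure_inter_conull hconull, hcyl, measure_pathCyl]
  simp

theorem lintegral_comp_eval_one (z : V) (g : V → ENNReal) :
    ∫⁻ ω, g (ω 1) ∂M.μ z = ∑' y, ENNReal.ofReal (M.p z y) * g y := by
  rw [← lintegral_map Measurable.of_discrete (measurable_pi_apply 1), lintegral_countable']
  refine tsum_congr fun y => ?_
  rw [Measure.map_apply (measurable_pi_apply 1) .of_discrete, mul_comm]
  exact congrArg (· * g y) (M.measure_eval_one z y)

theorem isHarmonic_measure_of_isTailEvent (hA : IsTailEvent A) :
    IsHarmonic M fun z => (M.μ z A).toReal := by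
  intro z
  have hsum : M.μ z A = ∑' y, ENNReal.ofReal (M.p z y) * M.μ y A := by
    have h := M.setLIntegral_measure_eval_of_isTailEvent hA z (n := 1)
      (@MeasurableSet.univ _ (Filtration.piLE (X := fun _ => V) 1))
    rwa [Measure.restrict_univ, Set.univ_inter, M.lintegral_comp_eval_one z fun y => M.μ y A,
      eq_comm] at h
  have hfin : ∀ y, ENNReal.ofReal (M.p z y) * M.μ y A ≠ ⊤ := fun y =>
    ENNReal.mul_ne_top ENNReal.ofReal_ne_top (measure_ne_top _ _)
  convert ENNReal.hasSum_toReal (hsum ▸ measure_ne_top _ _) using 1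
  · simp [ENNReal.toReal_mul, ENNReal.toReal_ofReal (M.p_nonneg z _)]
  · rw [← ENNReal.tsum_toReal_eq hfin, ← hsum]

end MarkovChain

/-- For a tail event `A`, the function `z ↦ μ_z(A)` is a sharp
harmonic function. -/
theorem tail_event_prob_sharp (M : MarkovChain V) (A : Set (ℕ → V))
    (hA : IsTailEvent A) :
    IsSharp M (fun z => (M.μ z A).toReal) := by
  have := M.discreteMeasurableSpace
  refine ⟨M.isHarmonic_measure_of_isTailEvent hA,
    fun x => ⟨ENNReal.toReal_nonneg, measureReal_le_one⟩, fun z => ?_⟩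
  exact ae_tendsto_zero_or_one_of_ae_eq_condExp_indicator Filtration.iSup_piLE hA.1
    (M.ae_eq_condExp_indicator_of_isTailEvent hA z)
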